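/- Strong Fenchel duality holds for the sketched program: min_{α ∈ ℝ^m} f(ASα) + (λ/2)‖Sα‖₂² = max_{y ∈ ℝ^n} −f*(y) − (1/(2λ))‖P_S Aᵀy‖₂², where P_S = S(SᵀS)†Sᵀ is the orthogonal projector onto range(S). There exist a sketched primal solution α* (attained) and a unique sketched dual solution y*, and for any sketched primal solution α* it holds that ASα* ∈ ∂f*(y*) and y* = ∇f(ASα*). -/

import Mathlib

open Matrix Finset Real Set

noncomputable section

namespace Sketch

/-- The ℓ2 norm of a vector in `Fin k → ℝ`. -/
def norm2 {k : ℕ} (x : Fin k → ℝ) : ℝ := Real.sqrt (∑ i, x i ^ 2)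

/-- The continuous linear functional `v ↦ ⟨w, v⟩`; used to state that a function has
gradient `w` at a point. -/
def dotCLM {k : ℕ} (w : Fin k → ℝ) : (Fin k → ℝ) →L[ℝ] ℝ :=
  LinearMap.toContinuousLinearMap
    { toFun := fun v => w ⬝ᵥ v
      map_add' := fun a b => dotProduct_add w a b
      map_smul' := fun c a => by
        simp [dotProduct, Finset.mul_sum, mul_left_comm] }

/-- The domain of the Fenchel conjugate `f*`. -/
def fenchelDom {k : ℕ} (f : (Fin k → ℝ) → ℝ) : Set (Fin k → ℝ) :=
  {z | BddAbove (Set.range fun w => w ⬝ᵥ z - f w)}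

/-- The Fenchel conjugate `f*(z) = sup_w (⟨w, z⟩ - f(w))` (as a real-valued supremum,
meaningful on `fenchelDom f`). -/
def fenchel {k : ℕ} (f : (Fin k → ℝ) → ℝ) (z : Fin k → ℝ) : ℝ :=
  ⨆ w, (w ⬝ᵥ z - f w)

/-- The subdifferential of the Fenchel conjugate `f*` at `z`. -/
def fenchelSubdiff {k : ℕ} (f : (Fin k → ℝ) → ℝ) (z : Fin k → ℝ) : Set (Fin k → ℝ) :=
  {g | ∀ y ∈ fenchelDom f, fenchel f z + g ⬝ᵥ (y - z) ≤ fenchel f y}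

/-- `P` is the orthogonal projector onto the range (column space) of `S`. -/
def IsOrthProj {q m : ℕ} (S : Matrix (Fin q) (Fin m) ℝ) (P : Matrix (Fin q) (Fin q) ℝ) : Prop :=
  Pᵀ = P ∧ P * P = P ∧ P * S = S ∧ ∃ C : Matrix (Fin m) (Fin q) ℝ, P = S * C

/-- The quantity `Z_f`: the supremum of `(Δᵀ B P⊥ Bᵀ Δ)^{1/2} / ‖Δ‖₂` over nonzero
`Δ ∈ dom f* - z*`. -/
def Zf {k q : ℕ} (f : (Fin k → ℝ) → ℝ) (B : Matrix (Fin k) (Fin q) ℝ)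
    (Pperp : Matrix (Fin q) (Fin q) ℝ) (zs : Fin k → ℝ) : ℝ :=
  sSup {r | ∃ Δ : Fin k → ℝ, Δ ≠ 0 ∧ zs + Δ ∈ fenchelDom f ∧
    r = Real.sqrt (Δ ⬝ᵥ (B * Pperp * Bᵀ).mulVec Δ) / norm2 Δ}

/-- The spectral norm (largest singular value) of a matrix. -/
def specNorm {a b : ℕ} (M : Matrix (Fin a) (Fin b) ℝ) : ℝ :=
  sSup {r | ∃ v : Fin b → ℝ, norm2 v = 1 ∧ r = norm2 (M.mulVec v)}

/-- The eigenvalues of `A * Aᵀ` (i.e. the squared singular values of `A`),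
sorted in decreasing order. -/
def eigsDesc {n d : ℕ} (A : Matrix (Fin n) (Fin d) ℝ) : Fin n → ℝ := fun i =>
  ((Matrix.isHermitian_mul_conjTranspose_self A).eigenvalues ∘
    Tuple.sort (Matrix.isHermitian_mul_conjTranspose_self A).eigenvalues) i.rev

/-- The spectral tail `R_k(A) = (σ_k² + (1/k) ∑_{j=k+1}^ρ σ_j²)^{1/2}`. -/
def Rk {n d : ℕ} (A : Matrix (Fin n) (Fin d) ℝ) (k : ℕ) : ℝ :=
  Real.sqrt ((∑ j : Fin n, if (j : ℕ) + 1 = k then eigsDesc A j else 0)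
    + (1 / (k : ℝ)) * ∑ j : Fin n, if k ≤ (j : ℕ) then eigsDesc A j else 0)

/-- Product measure on `n × m` matrices with i.i.d. standard Gaussian entries. -/
def gaussMatrix (n m : ℕ) : MeasureTheory.Measure (Fin n → Fin m → ℝ) :=
  MeasureTheory.Measure.pi fun _ => MeasureTheory.Measure.pi fun _ =>
    ProbabilityTheory.gaussianReal 0 1


/-- The largest eigenvalue (Rayleigh quotient supremum) of a symmetric matrix. -/
def eigMax {q : ℕ} (M : Matrix (Fin q) (Fin q) ℝ) : ℝ :=
  sSup {r | ∃ v : Fin q → ℝ, norm2 v = 1 ∧ r = v ⬝ᵥ M.mulVec v}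

/-- The smallest eigenvalue (Rayleigh quotient infimum) of a symmetric matrix. -/
def eigMin {q : ℕ} (M : Matrix (Fin q) (Fin q) ℝ) : ℝ :=
  sInf {r | ∃ v : Fin q → ℝ, norm2 v = 1 ∧ r = v ⬝ᵥ M.mulVec v}


/-!
Coercivity of `u ↦ f (A u) + λ/2 ‖u‖²` on `range S` gives a primal minimizer `α*`. Its
first-order condition `Sᵀ (Aᵀ ∇f(A S α*) + λ S α*) = 0` says `P Aᵀ y* = -λ S α*` for
`y* = ∇f(A S α*)`, and together with `f*(∇f w) = ⟪w, ∇f w⟫ - f w` this makes the dual value at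
`y*` equal to the primal value. Weak duality is Fenchel–Young combined with
`⟪A S α, y⟫ = ⟪S α, P Aᵀ y⟫` and AM-GM; a dual point `y` attaining the primal value makes
Fenchel–Young tight at `A S α*`, so `A S α*` maximizes `⟪·, y⟫ - f` and `y = ∇f(A S α*)`.
This gives uniqueness of `y*`, and applied to any other primal minimizer it gives the last claims.
-/

def sketchedPrimal {n d m : ℕ} (f : (Fin n → ℝ) → ℝ) (A : Matrix (Fin n) (Fin d) ℝ)
    (S : Matrix (Fin d) (Fin m) ℝ) (lam : ℝ) (α : Fin m → ℝ) : ℝ :=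
  f ((A * S) *ᵥ α) + lam / 2 * norm2 (S *ᵥ α) ^ 2

def sketchedDual {n d : ℕ} (f : (Fin n → ℝ) → ℝ) (A : Matrix (Fin n) (Fin d) ℝ)
    (P : Matrix (Fin d) (Fin d) ℝ) (lam : ℝ) (y : Fin n → ℝ) : ℝ :=
  -(fenchel f y) - 1 / (2 * lam) * norm2 ((P * Aᵀ) *ᵥ y) ^ 2

lemma norm2_sq {k : ℕ} (x : Fin k → ℝ) : norm2 x ^ 2 = x ⬝ᵥ x := by
  rw [norm2, Real.sq_sqrt (Finset.sum_nonneg fun i _ => sq_nonneg _)]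
  simp [dotProduct, sq]

lemma dotProduct_self_nonneg {k : ℕ} (x : Fin k → ℝ) : 0 ≤ x ⬝ᵥ x :=
  Finset.sum_nonneg fun i _ => mul_self_nonneg (x i)

lemma sq_norm_le_dotProduct_self {k : ℕ} (x : Fin k → ℝ) : ‖x‖ ^ 2 ≤ x ⬝ᵥ x := by
  have hx : ‖x‖ ≤ Real.sqrt (x ⬝ᵥ x) := by
    refine (pi_norm_le_iff_of_nonneg (Real.sqrt_nonneg _)).2 fun i => ?_
    rw [Real.norm_eq_abs, Real.le_sqrt (abs_nonneg _) (dotProduct_self_nonneg x), sq_abs, sq]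
    exact Finset.single_le_sum (fun j _ => mul_self_nonneg (x j)) (Finset.mem_univ i)
  calc ‖x‖ ^ 2 ≤ Real.sqrt (x ⬝ᵥ x) ^ 2 := pow_le_pow_left₀ (norm_nonneg x) hx 2
    _ = x ⬝ᵥ x := Real.sq_sqrt (dotProduct_self_nonneg x)

lemma neg_dotProduct_le {k : ℕ} {lam : ℝ} (hlam : 0 < lam) (u v : Fin k → ℝ) :
    -(u ⬝ᵥ v) ≤ lam / 2 * (u ⬝ᵥ u) + 1 / (2 * lam) * (v ⬝ᵥ v) := by
  have hsq : 0 ≤ (lam • u + v) ⬝ᵥ (lam • u + v) := dotProduct_self_nonneg _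
  have hexp : lam / 2 * (u ⬝ᵥ u) + 1 / (2 * lam) * (v ⬝ᵥ v) - -(u ⬝ᵥ v)
      = (lam • u + v) ⬝ᵥ (lam • u + v) / (2 * lam) := by
    simp only [add_dotProduct, dotProduct_add, smul_dotProduct, dotProduct_smul, smul_eq_mul,
      dotProduct_comm v u]
    field_simp
    ring
  linarith [div_nonneg hsq (by positivity : (0 : ℝ) ≤ 2 * lam)]

lemma hasDerivAt_dotProduct_self_add_smul {k : ℕ} (u v : Fin k → ℝ) :
    HasDerivAt (fun t : ℝ => (u + t • v) ⬝ᵥ (u + t • v)) (2 * (u ⬝ᵥ v)) 0 := by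
  have hpoly : (fun t : ℝ => (u + t • v) ⬝ᵥ (u + t • v))
      = fun t => u ⬝ᵥ u + t * (2 * (u ⬝ᵥ v)) + t ^ 2 * (v ⬝ᵥ v) := by
    funext t
    simp only [add_dotProduct, dotProduct_add, smul_dotProduct, dotProduct_smul, smul_eq_mul,
      dotProduct_comm v u]
    ring
  rw [hpoly]
  simpa using (((hasDerivAt_id (0 : ℝ)).mul_const (2 * (u ⬝ᵥ v))).const_add (u ⬝ᵥ u)).fun_add
    ((hasDerivAt_pow 2 (0 : ℝ)).mul_const (v ⬝ᵥ v))

lemma le_fenchel {k : ℕ} {f : (Fin k → ℝ) → ℝ} {y : Fin k → ℝ} (hy : y ∈ fenchelDom f)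
    (w : Fin k → ℝ) : w ⬝ᵥ y - f w ≤ fenchel f y :=
  le_ciSup hy w

namespace IsOrthProj

variable {d m : ℕ} {S : Matrix (Fin d) (Fin m) ℝ} {P : Matrix (Fin d) (Fin d) ℝ}

lemma mulVec_mulVec_eq (hP : IsOrthProj S P) (β : Fin m → ℝ) : P *ᵥ (S *ᵥ β) = S *ᵥ β := by
  rw [mulVec_mulVec, hP.2.2.1]

lemma mulVec_eq_zero (hP : IsOrthProj S P) {x : Fin d → ℝ} (hx : Sᵀ *ᵥ x = 0) :
    P *ᵥ x = 0 := by
  obtain ⟨hPt, -, -, C, hPC⟩ := hP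
  rw [← hPt, hPC, transpose_mul, ← mulVec_mulVec, hx, mulVec_zero]

lemma mul_mulVec_dotProduct (hP : IsOrthProj S P) {n : ℕ} (A : Matrix (Fin n) (Fin d) ℝ)
    (β : Fin m → ℝ) (y : Fin n → ℝ) :
    ((A * S) *ᵥ β) ⬝ᵥ y = (S *ᵥ β) ⬝ᵥ ((P * Aᵀ) *ᵥ y) := by
  calc ((A * S) *ᵥ β) ⬝ᵥ y = (S *ᵥ β) ⬝ᵥ (Aᵀ *ᵥ y) := by
        rw [← mulVec_mulVec, dotProduct_comm]
        exact (dotProduct_transpose_mulVec A _ _).symm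
    _ = (S *ᵥ β) ⬝ᵥ ((P * Aᵀ) *ᵥ y) := by
        rw [← mulVec_mulVec, ← hP.1, dotProduct_transpose_mulVec P, hP.mulVec_mulVec_eq,
          dotProduct_comm]

end IsOrthProj

section Duality

variable {n d m : ℕ} {f : (Fin n → ℝ) → ℝ} {A : Matrix (Fin n) (Fin d) ℝ} {lam : ℝ}
  {S : Matrix (Fin d) (Fin m) ℝ} {P : Matrix (Fin d) (Fin d) ℝ}

lemma neg_mul_mulVec_dotProduct_le (hlam : 0 < lam) (hP : IsOrthProj S P) (α : Fin m → ℝ)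
    (y : Fin n → ℝ) :
    -(((A * S) *ᵥ α) ⬝ᵥ y)
      ≤ lam / 2 * norm2 (S *ᵥ α) ^ 2 + 1 / (2 * lam) * norm2 ((P * Aᵀ) *ᵥ y) ^ 2 := by
  rw [hP.mul_mulVec_dotProduct, norm2_sq, norm2_sq]
  exact neg_dotProduct_le hlam _ _

lemma sketchedDual_le_sketchedPrimal (hlam : 0 < lam) (hP : IsOrthProj S P) {y : Fin n → ℝ}
    (hy : y ∈ fenchelDom f) (α : Fin m → ℝ) :
    sketchedDual f A P lam y ≤ sketchedPrimal f A S lam α := by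
  unfold sketchedDual sketchedPrimal
  linarith [le_fenchel hy ((A * S) *ᵥ α), neg_mul_mulVec_dotProduct_le (A := A) hlam hP α y]

lemma fenchel_le_of_sketchedPrimal_le (hlam : 0 < lam) (hP : IsOrthProj S P) {α : Fin m → ℝ}
    {y : Fin n → ℝ} (h : sketchedPrimal f A S lam α ≤ sketchedDual f A P lam y) :
    fenchel f y ≤ ((A * S) *ᵥ α) ⬝ᵥ y - f ((A * S) *ᵥ α) := by
  unfold sketchedDual sketchedPrimal at h
  linarith [neg_mul_mulVec_dotProduct_le (A := A) hlam hP α y]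

end Duality

section Gradient

variable {k : ℕ} {f : (Fin k → ℝ) → ℝ} {f' : (Fin k → ℝ) → Fin k → ℝ}

lemma dotCLM_apply (w v : Fin k → ℝ) : dotCLM w v = w ⬝ᵥ v := rfl

lemma hasDerivAt_comp_add_smul (hdiff : ∀ w, HasFDerivAt f (dotCLM (f' w)) w)
    (u v : Fin k → ℝ) (t : ℝ) :
    HasDerivAt (fun s : ℝ => f (u + s • v)) (f' (u + t • v) ⬝ᵥ v) t := by
  have hline : HasDerivAt (fun s : ℝ => u + s • v) v t := by
    simpa using ((hasDerivAt_id t).smul_const v).const_add u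
  exact (hdiff (u + t • v)).comp_hasDerivAt t hline

lemma ConvexOn.add_grad_dotProduct_le (hconv : ConvexOn ℝ Set.univ f)
    (hdiff : ∀ w, HasFDerivAt f (dotCLM (f' w)) w) (u w : Fin k → ℝ) :
    f u + f' u ⬝ᵥ (w - u) ≤ f w := by
  have hline : HasDerivAt (f ∘ AffineMap.lineMap (k := ℝ) u w) (f' u ⬝ᵥ (w - u)) 0 := by
    have h := (hdiff (AffineMap.lineMap u w (0 : ℝ))).comp_hasDerivAt (0 : ℝ)
      (AffineMap.hasDerivAt_lineMap (𝕜 := ℝ) (a := u) (b := w))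
    simpa only [AffineMap.lineMap_apply_zero, dotCLM_apply] using h
  have hslope := (hconv.comp_affineMap (AffineMap.lineMap u w)).le_slope_of_hasDerivAt
    (Set.mem_univ 0) (Set.mem_univ 1) zero_lt_one hline
  simp only [slope_def_field, Function.comp_apply, AffineMap.lineMap_apply_zero,
    AffineMap.lineMap_apply_one, sub_zero, div_one] at hslope
  linarith

lemma dotProduct_grad_sub_le (hconv : ConvexOn ℝ Set.univ f)
    (hdiff : ∀ w, HasFDerivAt f (dotCLM (f' w)) w) (w v : Fin k → ℝ) :
    v ⬝ᵥ f' w - f v ≤ w ⬝ᵥ f' w - f w := by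
  have h := ConvexOn.add_grad_dotProduct_le hconv hdiff w v
  rw [dotProduct_sub, dotProduct_comm _ v, dotProduct_comm _ w] at h
  linarith

lemma grad_mem_fenchelDom (hconv : ConvexOn ℝ Set.univ f)
    (hdiff : ∀ w, HasFDerivAt f (dotCLM (f' w)) w) (w : Fin k → ℝ) :
    f' w ∈ fenchelDom f :=
  ⟨_, Set.forall_mem_range.2 (dotProduct_grad_sub_le hconv hdiff w)⟩

lemma fenchel_grad (hconv : ConvexOn ℝ Set.univ f)
    (hdiff : ∀ w, HasFDerivAt f (dotCLM (f' w)) w) (w : Fin k → ℝ) :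
    fenchel f (f' w) = w ⬝ᵥ f' w - f w :=
  le_antisymm (ciSup_le (dotProduct_grad_sub_le hconv hdiff w))
    (le_fenchel (grad_mem_fenchelDom hconv hdiff w) w)

lemma mem_fenchelSubdiff_grad (hconv : ConvexOn ℝ Set.univ f)
    (hdiff : ∀ w, HasFDerivAt f (dotCLM (f' w)) w) (w : Fin k → ℝ) :
    w ∈ fenchelSubdiff f (f' w) := by
  intro y hy
  rw [fenchel_grad hconv hdiff w, dotProduct_sub]
  linarith [le_fenchel hy w]

lemma eq_grad_of_fenchel_le (hdiff : ∀ w, HasFDerivAt f (dotCLM (f' w)) w) {w y : Fin k → ℝ}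
    (hy : y ∈ fenchelDom f) (h : fenchel f y ≤ w ⬝ᵥ y - f w) : y = f' w := by
  have hmin : IsLocalMin (fun v => f v - dotCLM y v) w :=
    Filter.Eventually.of_forall fun v => by
      simp only [dotCLM_apply, dotProduct_comm y]
      linarith [le_fenchel hy v]
  have hzero := hmin.hasFDerivAt_eq_zero ((hdiff w).sub (dotCLM y).hasFDerivAt)
  funext i
  have hi := congrArg (fun L => L (Pi.single i 1)) hzero
  simp only [_root_.sub_apply, dotCLM_apply, dotProduct_single, mul_one,
    _root_.zero_apply, sub_eq_zero] at hi
  exact hi.symm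

end Gradient

section Minimizer

variable {n d m : ℕ} {f : (Fin n → ℝ) → ℝ} {f' : (Fin n → ℝ) → Fin n → ℝ}
  {A : Matrix (Fin n) (Fin d) ℝ} {lam : ℝ} {S : Matrix (Fin d) (Fin m) ℝ}

lemma exists_forall_sketchedPrimal_le (hconv : ConvexOn ℝ Set.univ f)
    (hdiff : ∀ w, HasFDerivAt f (dotCLM (f' w)) w) (hlam : 0 < lam) :
    ∃ α₀, ∀ α, sketchedPrimal f A S lam α₀ ≤ sketchedPrimal f A S lam α := by
  set g : (Fin d → ℝ) → ℝ := fun u => f (A *ᵥ u) + lam / 2 * (u ⬝ᵥ u)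
  have hprimal : ∀ α, sketchedPrimal f A S lam α = g (S *ᵥ α) := fun α => by
    rw [sketchedPrimal, norm2_sq, ← mulVec_mulVec]
  set c := Aᵀ *ᵥ f' 0
  have hbound : ∀ u, f 0 - 1 / lam * (c ⬝ᵥ c) + lam / 4 * ‖u‖ ^ 2 ≤ g u := fun u => by
    have hgrad := ConvexOn.add_grad_dotProduct_le hconv hdiff 0 (A *ᵥ u)
    rw [sub_zero, dotProduct_mulVec, ← mulVec_transpose, dotProduct_comm] at hgrad
    have hamgm := neg_dotProduct_le (half_pos hlam) u c
    have hnorm := sq_norm_le_dotProduct_self u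
    rw [show 1 / (2 * (lam / 2)) = 1 / lam by ring] at hamgm
    show _ ≤ f (A *ᵥ u) + lam / 2 * (u ⬝ᵥ u)
    nlinarith
  set V := LinearMap.range (mulVecLin S)
  have hcont : Continuous fun u : V => g u := by
    have hf : Continuous f := continuous_iff_continuousAt.2 fun w => (hdiff w).continuousAt
    have hgc : Continuous g := (hf.comp (continuous_const.matrix_mulVec continuous_id)).add
      (continuous_const.mul (continuous_id.dotProduct continuous_id))
    exact hgc.comp continuous_subtype_val
  have hcoercive : Filter.Tendsto (fun u : V => g u) (Filter.cocompact V) Filter.atTop := by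
    refine Filter.tendsto_atTop_mono (fun u => hbound u) ?_
    exact Filter.tendsto_atTop_add_const_left _ _
      (((Filter.tendsto_pow_atTop two_ne_zero).const_mul_atTop (by positivity)).comp
        tendsto_norm_cocompact_atTop)
  obtain ⟨⟨_, α₀, rfl⟩, hα₀⟩ := hcont.exists_forall_le hcoercive
  exact ⟨α₀, fun α => by simpa only [hprimal, mulVecLin_apply] using hα₀ ⟨S *ᵥ α, α, rfl⟩⟩

end Minimizer

section FirstOrder

variable {n d m : ℕ} {f : (Fin n → ℝ) → ℝ} {f' : (Fin n → ℝ) → Fin n → ℝ}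
  {A : Matrix (Fin n) (Fin d) ℝ} {lam : ℝ} {S : Matrix (Fin d) (Fin m) ℝ}
  {P : Matrix (Fin d) (Fin d) ℝ} {α₀ : Fin m → ℝ}

lemma grad_dotProduct_add_eq_zero (hdiff : ∀ w, HasFDerivAt f (dotCLM (f' w)) w)
    (hmin : ∀ α, sketchedPrimal f A S lam α₀ ≤ sketchedPrimal f A S lam α) (v : Fin m → ℝ) :
    f' ((A * S) *ᵥ α₀) ⬝ᵥ ((A * S) *ᵥ v) + lam * ((S *ᵥ α₀) ⬝ᵥ (S *ᵥ v)) = 0 := by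
  have hline : (fun t : ℝ => sketchedPrimal f A S lam (α₀ + t • v))
      = fun t => f ((A * S) *ᵥ α₀ + t • ((A * S) *ᵥ v))
          + lam / 2 * ((S *ᵥ α₀ + t • S *ᵥ v) ⬝ᵥ (S *ᵥ α₀ + t • S *ᵥ v)) := by
    funext t
    rw [sketchedPrimal, norm2_sq, mulVec_add, mulVec_add, mulVec_smul, mulVec_smul]
  have hderiv : HasDerivAt (fun t : ℝ => sketchedPrimal f A S lam (α₀ + t • v))
      (f' ((A * S) *ᵥ α₀) ⬝ᵥ ((A * S) *ᵥ v) + lam * ((S *ᵥ α₀) ⬝ᵥ (S *ᵥ v))) 0 := by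
    rw [hline]
    refine ((hasDerivAt_comp_add_smul hdiff ((A * S) *ᵥ α₀) ((A * S) *ᵥ v) 0).fun_add
      ((hasDerivAt_dotProduct_self_add_smul (S *ᵥ α₀) (S *ᵥ v)).const_mul (lam / 2))).congr_deriv ?_
    rw [zero_smul, add_zero]
    ring
  have hlocal : IsLocalMin (fun t : ℝ => sketchedPrimal f A S lam (α₀ + t • v)) 0 :=
    Filter.Eventually.of_forall fun t => by simpa using hmin (α₀ + t • v)
  exact hlocal.hasDerivAt_eq_zero hderiv

lemma mul_transpose_mulVec_grad_eq (hdiff : ∀ w, HasFDerivAt f (dotCLM (f' w)) w)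
    (hP : IsOrthProj S P)
    (hmin : ∀ α, sketchedPrimal f A S lam α₀ ≤ sketchedPrimal f A S lam α) :
    (P * Aᵀ) *ᵥ f' ((A * S) *ᵥ α₀) = -lam • (S *ᵥ α₀) := by
  set y₀ := f' ((A * S) *ᵥ α₀)
  have hker : Sᵀ *ᵥ (Aᵀ *ᵥ y₀ + lam • (S *ᵥ α₀)) = 0 := by
    have hv : ∀ v, v ⬝ᵥ Sᵀ *ᵥ (Aᵀ *ᵥ y₀ + lam • (S *ᵥ α₀)) = 0 := fun v => by
      rw [dotProduct_transpose_mulVec, add_dotProduct, dotProduct_comm, dotProduct_transpose_mulVec,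
        mulVec_mulVec, smul_dotProduct, smul_eq_mul]
      exact grad_dotProduct_add_eq_zero hdiff hmin v
    funext i
    simpa using hv (Pi.single i 1)
  have hPker := hP.mulVec_eq_zero hker
  rw [mulVec_add, mulVec_smul, hP.mulVec_mulVec_eq] at hPker
  rw [← mulVec_mulVec, neg_smul]
  exact eq_neg_of_add_eq_zero_left hPker

lemma sketchedDual_grad_eq_sketchedPrimal (hconv : ConvexOn ℝ Set.univ f)
    (hdiff : ∀ w, HasFDerivAt f (dotCLM (f' w)) w) (hP : IsOrthProj S P)
    (hmin : ∀ α, sketchedPrimal f A S lam α₀ ≤ sketchedPrimal f A S lam α) :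
    sketchedDual f A P lam (f' ((A * S) *ᵥ α₀)) = sketchedPrimal f A S lam α₀ := by
  have hPy := mul_transpose_mulVec_grad_eq hdiff hP hmin
  have hpair := hP.mul_mulVec_dotProduct A α₀ (f' ((A * S) *ᵥ α₀))
  rw [sketchedDual, sketchedPrimal, fenchel_grad hconv hdiff, hpair, hPy, norm2_sq, norm2_sq]
  simp only [neg_smul, dotProduct_neg, neg_dotProduct, dotProduct_smul, smul_dotProduct,
    smul_eq_mul]
  field_simp
  ring

end FirstOrder

theorem statement_1_general {n d m : ℕ} (f : (Fin n → ℝ) → ℝ) (f' : (Fin n → ℝ) → Fin n → ℝ)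
    (A : Matrix (Fin n) (Fin d) ℝ) (lam : ℝ)
    (hlam : 0 < lam)
    (hconv : ConvexOn ℝ Set.univ f)
    (hdiff : ∀ w, HasFDerivAt f (dotCLM (f' w)) w)
    (S : Matrix (Fin d) (Fin m) ℝ) (P : Matrix (Fin d) (Fin d) ℝ)
    (hP : IsOrthProj S P) :
    ∃ αs : Fin m → ℝ,
      (∀ α : Fin m → ℝ,
        f ((A * S).mulVec αs) + lam / 2 * norm2 (S.mulVec αs) ^ 2
          ≤ f ((A * S).mulVec α) + lam / 2 * norm2 (S.mulVec α) ^ 2) ∧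
      ∃ ys : Fin n → ℝ, ys ∈ fenchelDom f ∧
        (∀ y ∈ fenchelDom f,
          -(fenchel f y) - 1 / (2 * lam) * norm2 ((P * Aᵀ).mulVec y) ^ 2
            ≤ -(fenchel f ys) - 1 / (2 * lam) * norm2 ((P * Aᵀ).mulVec ys) ^ 2) ∧
        (∀ y' ∈ fenchelDom f,
          (∀ y ∈ fenchelDom f,
            -(fenchel f y) - 1 / (2 * lam) * norm2 ((P * Aᵀ).mulVec y) ^ 2
              ≤ -(fenchel f y') - 1 / (2 * lam) * norm2 ((P * Aᵀ).mulVec y') ^ 2) → y' = ys) ∧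
        (f ((A * S).mulVec αs) + lam / 2 * norm2 (S.mulVec αs) ^ 2
          = -(fenchel f ys) - 1 / (2 * lam) * norm2 ((P * Aᵀ).mulVec ys) ^ 2) ∧
        (∀ α' : Fin m → ℝ,
          (∀ α, f ((A * S).mulVec α') + lam / 2 * norm2 (S.mulVec α') ^ 2
              ≤ f ((A * S).mulVec α) + lam / 2 * norm2 (S.mulVec α) ^ 2) →
          (A * S).mulVec α' ∈ fenchelSubdiff f ys ∧ ys = f' ((A * S).mulVec α')) := by
  obtain ⟨αs, hαs⟩ := exists_forall_sketchedPrimal_le (A := A) (S := S) hconv hdiff hlam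
  set ys := f' ((A * S) *ᵥ αs)
  have hstrong : sketchedDual f A P lam ys = sketchedPrimal f A S lam αs :=
    sketchedDual_grad_eq_sketchedPrimal hconv hdiff hP hαs
  have hdom : ∀ w, f' w ∈ fenchelDom f := grad_mem_fenchelDom hconv hdiff
  have huniq : ∀ y ∈ fenchelDom f, sketchedPrimal f A S lam αs ≤ sketchedDual f A P lam y →
      y = ys := fun y hy h =>
    eq_grad_of_fenchel_le hdiff hy (fenchel_le_of_sketchedPrimal_le hlam hP h)
  refine ⟨αs, hαs, ys, hdom _,
    fun y hy => (sketchedDual_le_sketchedPrimal hlam hP hy αs).trans_eq hstrong.symm,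
    fun y hy hmax => huniq y hy (hstrong.symm.trans_le (hmax ys (hdom _))),
    hstrong.symm, fun α' hα' => ?_⟩
  have hys : f' ((A * S) *ᵥ α') = ys := huniq _ (hdom _) <|
    (hαs α').trans_eq (sketchedDual_grad_eq_sketchedPrimal hconv hdiff hP hα').symm
  exact hys ▸ ⟨mem_fenchelSubdiff_grad hconv hdiff _, rfl⟩

/-- Fenchel duality for the sketched program: strong duality, attainment
of a sketched primal solution `αs`, existence and uniqueness of the sketched dual solution
`ys`, and for every sketched primal minimizer `α'`, `A S α' ∈ ∂f*(ys)` and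
`ys = ∇f(A S α')`. -/
theorem statement_1 {n d m : ℕ} (f : (Fin n → ℝ) → ℝ) (f' : (Fin n → ℝ) → Fin n → ℝ)
    (A : Matrix (Fin n) (Fin d) ℝ) (μ lam : ℝ)
    (hμ : 0 < μ) (hlam : 0 < lam)
    (hconv : ConvexOn ℝ Set.univ f)
    (hdiff : ∀ w, HasFDerivAt f (dotCLM (f' w)) w)
    (hsmooth : ∀ w v, norm2 (f' w - f' v) ≤ μ * norm2 (w - v))
    (S : Matrix (Fin d) (Fin m) ℝ) (P : Matrix (Fin d) (Fin d) ℝ)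
    (hP : IsOrthProj S P) :
    ∃ αs : Fin m → ℝ,
      (∀ α : Fin m → ℝ,
        f ((A * S).mulVec αs) + lam / 2 * norm2 (S.mulVec αs) ^ 2
          ≤ f ((A * S).mulVec α) + lam / 2 * norm2 (S.mulVec α) ^ 2) ∧
      ∃ ys : Fin n → ℝ, ys ∈ fenchelDom f ∧
        (∀ y ∈ fenchelDom f,
          -(fenchel f y) - 1 / (2 * lam) * norm2 ((P * Aᵀ).mulVec y) ^ 2
            ≤ -(fenchel f ys) - 1 / (2 * lam) * norm2 ((P * Aᵀ).mulVec ys) ^ 2) ∧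
        (∀ y' ∈ fenchelDom f,
          (∀ y ∈ fenchelDom f,
            -(fenchel f y) - 1 / (2 * lam) * norm2 ((P * Aᵀ).mulVec y) ^ 2
              ≤ -(fenchel f y') - 1 / (2 * lam) * norm2 ((P * Aᵀ).mulVec y') ^ 2) → y' = ys) ∧
        (f ((A * S).mulVec αs) + lam / 2 * norm2 (S.mulVec αs) ^ 2
          = -(fenchel f ys) - 1 / (2 * lam) * norm2 ((P * Aᵀ).mulVec ys) ^ 2) ∧
        (∀ α' : Fin m → ℝ,
          (∀ α, f ((A * S).mulVec α') + lam / 2 * norm2 (S.mulVec α') ^ 2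
              ≤ f ((A * S).mulVec α) + lam / 2 * norm2 (S.mulVec α) ^ 2) →
          (A * S).mulVec α' ∈ fenchelSubdiff f ys ∧ ys = f' ((A * S).mulVec α')) :=
  statement_1_general f f' A lam hlam hconv hdiff S P hP

end Sketch
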